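/- Let X_1,…,X_N and A_1,…,A_N be finite-dimensional complex Hilbert spaces and let T be a Hermitian-preserving linear map from operators on X_1⊗⋯⊗X_N to operators on A_1⊗⋯⊗A_N. Fix a nonempty subset I ⊆ {1,…,N}, density matrices ρ_{i,0}, ρ_{i,1} on X_i for i ∈ I, and density matrices σ_j on X_j for j ∉ I, and set Δ := ⊗_{i∈I}(ρ_{i,0} − ρ_{i,1}) ⊗ ⊗_{j∉I}σ_j (each factor in its position). If Tr[ ( ⊗_{i∈I} E_i ⊗ ⊗_{j∉I} I_{A_j} ) · T(Δ) ] = 0 for every choice of operators E_i on A_i with 0 ≤ E_i ≤ I_{A_i} (i ∈ I), then the partial trace over the factors (A_j)_{j∉I} of T(Δ) is the zero operator on ⊗_{i∈I} A_i. Hence a channel all of whose local input-output relations satisfy the weak parity-erasure principle is parity-erasure. -/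
import Mathlib


open scoped BigOperators ComplexOrder

namespace ParityErasurePaper

/-- A density matrix: a positive semidefinite operator of trace one. -/
def IsDensity {n : Type*} [Fintype n] (ρ : Matrix n n ℂ) : Prop :=
  ρ.PosSemidef ∧ ρ.trace = 1

variable {N : ℕ}

/-- Basis indices for the tensor product `⊗_{i} H_i` where `dim H_i = d i`. -/
abbrev PiIx (d : Fin N → ℕ) : Type := (i : Fin N) → Fin (d i)

/-- Basis indices for `X_1 ⊗ ⋯ ⊗ X_N ⊗ A_1 ⊗ ⋯ ⊗ A_N`. -/
abbrev BigIx (dX dA : Fin N → ℕ) : Type := PiIx dX × PiIx dA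

/-- `P_{X_k}(S) = Tr_{X_k}(S) ⊗ I_{X_k}/d_{X_k}` (with the factor re-inserted in place). -/
noncomputable def depolX (dX dA : Fin N → ℕ) (k : Fin N)
    (S : Matrix (BigIx dX dA) (BigIx dX dA) ℂ) : Matrix (BigIx dX dA) (BigIx dX dA) ℂ :=
  Matrix.of fun p q =>
    (if p.1 k = q.1 k then ((dX k : ℂ))⁻¹ else 0) *
      ∑ z : Fin (dX k), S (Function.update p.1 k z, p.2) (Function.update q.1 k z, q.2)

/-- `P_{A_k}(S) = Tr_{A_k}(S) ⊗ I_{A_k}/d_{A_k}` (with the factor re-inserted in place). -/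
noncomputable def depolA (dX dA : Fin N → ℕ) (k : Fin N)
    (S : Matrix (BigIx dX dA) (BigIx dX dA) ℂ) : Matrix (BigIx dX dA) (BigIx dX dA) ℂ :=
  Matrix.of fun p q =>
    (if p.2 k = q.2 k then ((dA k : ℂ))⁻¹ else 0) *
      ∑ z : Fin (dA k), S (p.1, Function.update p.2 k z) (q.1, Function.update q.2 k z)

/-- The process conditions (3): for every nonempty `I ⊆ {1,…,N}`,
`(∘_{i∈I} (id − P_{X_i})) ∘ (∘_{j∉I} (P_{A_j} ∘ P_{X_j})) (S) = 0`
(the maps commute, so the order of composition is irrelevant). -/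
def ProcessConditions (dX dA : Fin N → ℕ)
    (S : Matrix (BigIx dX dA) (BigIx dX dA) ℂ) : Prop :=
  ∀ I : Finset (Fin N), I.Nonempty →
    ((I.toList.map fun i => fun S' => S' - depolX dX dA i S').foldr (· ∘ ·) id)
      (((Iᶜ.toList.map fun j => fun S' => depolA dX dA j (depolX dX dA j S')).foldr
        (· ∘ ·) id) S) = 0

/-- Partial trace over the tensor factors outside `I`, giving an operator on `⊗_{i∈I} H_i`. -/
noncomputable def ptraceOut {d : Fin N → ℕ} (I : Finset (Fin N)) (M : Matrix (PiIx d) (PiIx d) ℂ) :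
    Matrix ((i : {m // m ∈ I}) → Fin (d i.1)) ((i : {m // m ∈ I}) → Fin (d i.1)) ℂ :=
  Matrix.of fun a b => ∑ c : (j : {m // m ∉ I}) → Fin (d j.1),
    M (fun i => if h : i ∈ I then a ⟨i, h⟩ else c ⟨i, h⟩)
      (fun i => if h : i ∈ I then b ⟨i, h⟩ else c ⟨i, h⟩)

/-- The channel induced by a Choi matrix `S`: `T(ρ) = Tr_input[(ρ^T ⊗ I) S]`,
with the transpose taken in the fixed basis used to express `S`. -/
noncomputable def chan {ι κ : Type*} [Fintype ι] [Fintype κ] [DecidableEq κ]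
    (S : Matrix (ι × κ) (ι × κ) ℂ) (ρ : Matrix ι ι ℂ) : Matrix κ κ ℂ :=
  Matrix.of fun a b => ∑ x : ι,
    ((Matrix.of fun p q : ι × κ => ρ.transpose p.1 q.1 * (if p.2 = q.2 then (1 : ℂ) else 0))
      * S) (x, a) (x, b)

/-- `T` is parity-erasure: for every nonempty `I`, all choices of density matrices
`ρ_{i,0}, ρ_{i,1}` (`i ∈ I`) and `σ_j` (`j ∉ I`), the partial trace over `(A_j)_{j∉I}` of
`T(⊗_{i∈I}(ρ_{i,0} − ρ_{i,1}) ⊗ ⊗_{j∉I} σ_j)` vanishes. -/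
def IsParityErasure (dX dA : Fin N → ℕ)
    (T : Matrix (PiIx dX) (PiIx dX) ℂ → Matrix (PiIx dA) (PiIx dA) ℂ) : Prop :=
  ∀ I : Finset (Fin N), I.Nonempty →
    ∀ ρ : (i : Fin N) → Fin 2 → Matrix (Fin (dX i)) (Fin (dX i)) ℂ,
    ∀ σ : (i : Fin N) → Matrix (Fin (dX i)) (Fin (dX i)) ℂ,
    (∀ i b, IsDensity (ρ i b)) → (∀ j, IsDensity (σ j)) →
    ptraceOut I (T (Matrix.of fun x y =>
        (∏ i ∈ I, (ρ i 0 - ρ i 1) (x i) (y i)) * ∏ j ∈ Iᶜ, σ j (x j) (y j))) = 0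


section Effects

open Matrix

set_option linter.unusedSectionVars false

variable {n : Type*} [Fintype n] [DecidableEq n]

def IsEffect (E : Matrix n n ℂ) : Prop := E.PosSemidef ∧ (1 - E).PosSemidef

lemma effect_of_proj {P : Matrix n n ℂ} (hH : P.IsHermitian) (hP : P * P = P) :
    IsEffect P := by
  constructor
  · have h1 : Pᴴ * P = P := by rw [hH]; exact hP
    simpa [h1] using Matrix.posSemidef_conjTranspose_mul_self P
  · have hH' : (1 - P).IsHermitian := by
      simpa using (Matrix.isHermitian_one (n := n) (α := ℂ)).sub hH
    have h2 : (1 - P)ᴴ * (1 - P) = 1 - P := by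
      rw [hH']
      simp [Matrix.sub_mul, Matrix.mul_sub, hP]
    exact h2 ▸ Matrix.posSemidef_conjTranspose_mul_self (1 - P)

lemma effect_smul_vecMulVec (v : n → ℂ) (c : ℝ)
    (hv : star v ⬝ᵥ v = (c : ℂ)) :
    IsEffect ((c : ℂ)⁻¹ • Matrix.vecMulVec v (star v)) := by
  apply effect_of_proj
  · ext p q
    simp only [Matrix.conjTranspose_apply, Matrix.smul_apply, Matrix.vecMulVec_apply,
      Pi.star_apply, star_mul', star_star, smul_eq_mul]
    simp only [Complex.star_def, map_inv₀, Complex.conj_ofReal]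
    ring
  · ext p q
    simp only [Matrix.mul_apply, Matrix.smul_apply, Matrix.vecMulVec_apply, Pi.star_apply,
      smul_eq_mul]
    have key : ∑ r, (c : ℂ)⁻¹ * (v p * star (v r)) * ((c:ℂ)⁻¹ * (v r * star (v q)))
        = (c:ℂ)⁻¹ * ((c:ℂ)⁻¹ * ((star v ⬝ᵥ v) * (v p * star (v q)))) := by
      rw [dotProduct]
      rw [Finset.sum_mul, Finset.mul_sum, Finset.mul_sum]
      apply Finset.sum_congr rfl
      intros
      simp only [Pi.star_apply]
      ring
    rw [key, hv]
    rcases eq_or_ne (c : ℂ) 0 with h0 | h0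
    · simp [h0]
    · field_simp

def pairVec (a b : n) (c : ℂ) : n → ℂ := fun k => if k = a then 1 else if k = b then c else 0

@[simp] lemma pairVec_apply (a b : n) (c : ℂ) (k : n) :
    pairVec a b c k = if k = a then 1 else if k = b then c else 0 := rfl

def oneVec (a : n) : n → ℂ := fun k => if k = a then 1 else 0

@[simp] lemma oneVec_apply (a k : n) : oneVec a k = if k = a then 1 else 0 := rfl

lemma sum_pair {a b : n} (hab : a ≠ b) (x y : ℂ) :
    ∑ k : n, (if k = a then x else if k = b then y else 0) = x + y := by
  have h : ∀ k : n, (if k = a then x else if k = b then y else 0)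
      = (if k = a then x else 0) + (if k = b then y else 0) := by
    intro k
    by_cases h1 : k = a
    · subst h1; simp [hab]
    · simp [h1]
  simp only [h, Finset.sum_add_distrib, Finset.sum_ite_eq' Finset.univ, Finset.mem_univ, if_true]

lemma stdBasis_mem_span (a b : n) :
    Matrix.single a b (1:ℂ) ∈ Submodule.span ℂ {E : Matrix n n ℂ | IsEffect E} := by
  have honev : ∀ x : n, star (oneVec x) ⬝ᵥ oneVec x = ((1:ℝ):ℂ) := by
    intro x
    simp [dotProduct, apply_ite (star : ℂ → ℂ), ite_and,
      Finset.sum_ite_eq' Finset.univ]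
  rcases eq_or_ne a b with rfl | hab
  · have heff := effect_smul_vecMulVec (oneVec a) 1 (honev a)
    have heq : Matrix.single a a (1:ℂ)
        = ((1:ℝ):ℂ)⁻¹ • Matrix.vecMulVec (oneVec a) (star (oneVec a)) := by
      ext p q
      simp only [Matrix.single, Matrix.smul_apply, Matrix.vecMulVec_apply,
        Pi.star_apply, oneVec_apply, Matrix.of_apply, smul_eq_mul]
      by_cases hp : p = a <;> by_cases hq : q = a
      · simp [hp, hq]
      · simp [hp, hq, Ne.symm hq]
      · simp [hp, hq, Ne.symm hp]
      · simp [hp, hq, Ne.symm hp]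
    rw [heq]
    exact Submodule.subset_span heff
  · have hpv : ∀ c : ℂ, star c * c = 1 →
        star (pairVec a b c) ⬝ᵥ pairVec a b c = ((2:ℝ):ℂ) := by
      intro c hc
      have h : ∀ k, star (pairVec a b c k) * pairVec a b c k
          = (if k = a then (1:ℂ) else if k = b then 1 else 0) := by
        intro k
        simp only [pairVec_apply]
        split_ifs
        · simp
        · simpa [Complex.star_def] using hc
        · simp
      simp only [dotProduct, Pi.star_apply, h, sum_pair hab]
      norm_num
    have hv1 := hpv 1 (by norm_num)
    have hv2 := hpv Complex.I (by simp)
    have heq : Matrix.single a b (1:ℂ)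
        = ((2:ℝ):ℂ)⁻¹ • Matrix.vecMulVec (pairVec a b 1) (star (pairVec a b 1))
          + Complex.I • (((2:ℝ):ℂ)⁻¹ • Matrix.vecMulVec (pairVec a b Complex.I)
              (star (pairVec a b Complex.I)))
          + (-(1+Complex.I)/2) • (((1:ℝ):ℂ)⁻¹ • Matrix.vecMulVec (oneVec a) (star (oneVec a)))
          + (-(1+Complex.I)/2) • (((1:ℝ):ℂ)⁻¹ • Matrix.vecMulVec (oneVec b) (star (oneVec b))) := by
      clear hv1 hv2 hpv honev
      ext p q
      simp only [Matrix.single, Matrix.add_apply, Matrix.smul_apply,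
        Matrix.vecMulVec_apply, Pi.star_apply, pairVec_apply, oneVec_apply,
        Matrix.of_apply, smul_eq_mul]
      by_cases hp : p = a <;> by_cases hq : q = a <;>
        by_cases hp' : p = b <;> by_cases hq' : q = b
      all_goals try tauto
      all_goals try simp_all [Complex.star_def]
      all_goals try tauto
      all_goals try simp [Ne.symm hab]
      all_goals try norm_num [Complex.ext_iff]
      all_goals try (ring_nf; norm_num [Complex.ext_iff])
    rw [heq]
    refine Submodule.add_mem _ (Submodule.add_mem _ (Submodule.add_mem _
      (Submodule.subset_span (effect_smul_vecMulVec _ 2 hv1))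
      (Submodule.smul_mem _ _
        (Submodule.subset_span (effect_smul_vecMulVec _ 2 hv2))))
      (Submodule.smul_mem _ _ (Submodule.subset_span (effect_smul_vecMulVec _ 1 (honev a)))))
      (Submodule.smul_mem _ _ (Submodule.subset_span (effect_smul_vecMulVec _ 1 (honev b))))

/-- Every matrix is in the span of the effects. -/
lemma mem_span_effects (B : Matrix n n ℂ) :
    B ∈ Submodule.span ℂ {E : Matrix n n ℂ | IsEffect E} := by
  rw [Matrix.matrix_eq_sum_single B]
  refine Submodule.sum_mem _ fun i _ => Submodule.sum_mem _ fun j _ => ?_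
  have : Matrix.single i j (B i j) = B i j • Matrix.single i j 1 := by
    ext p q
    simp only [Matrix.single, Matrix.smul_apply, Matrix.of_apply, smul_eq_mul]
    split_ifs <;> simp
  rw [this]
  exact Submodule.smul_mem _ _ (stdBasis_mem_span i j)


theorem ite_one_mul_ite_mul (A B : Prop) [Decidable A] [Decidable B] [Decidable (A ∧ B)]
    (m : ℂ) : (if A then (1:ℂ) else 0) * (if B then 1 else 0) * m = if A ∧ B then m else 0 := by
  split_ifs <;> simp_all

theorem aux_main {N : ℕ} (dA : Fin N → ℕ)
    (M : Matrix (PiIx dA) (PiIx dA) ℂ)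
    (I : Finset (Fin N)) (hI : I.Nonempty)
    (h : ∀ E : (i : Fin N) → Matrix (Fin (dA i)) (Fin (dA i)) ℂ,
      (∀ i ∈ I, (E i).PosSemidef ∧
        ((1 : Matrix (Fin (dA i)) (Fin (dA i)) ℂ) - E i).PosSemidef) →
      Matrix.trace
        ((Matrix.of fun a b : PiIx dA =>
            (∏ i ∈ I, E i (a i) (b i)) * ∏ j ∈ Iᶜ, (if a j = b j then (1 : ℂ) else 0)) *
          M) = 0) :
    ptraceOut I M = 0 := by
  classical
  -- the functional
  set F : ((i : Fin N) → Matrix (Fin (dA i)) (Fin (dA i)) ℂ) → ℂ :=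
    fun E => Matrix.trace
        ((Matrix.of fun a b : PiIx dA =>
            (∏ i ∈ I, E i (a i) (b i)) * ∏ j ∈ Iᶜ, (if a j = b j then (1 : ℂ) else 0)) *
          M) with hF
  have Ftrace : ∀ E, F E = ∑ p : PiIx dA, ∑ q : PiIx dA,
      ((∏ i ∈ I, E i (p i) (q i)) * ∏ j ∈ Iᶜ, (if p j = q j then (1:ℂ) else 0)) * M q p := by
    intro E
    simp [hF, Matrix.trace, Matrix.mul_apply, Matrix.diag]
  -- linearity in one coordinate
  have hupd : ∀ (E : (i : Fin N) → Matrix (Fin (dA i)) (Fin (dA i)) ℂ)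
      (k : Fin N) (hk : k ∈ I) (B : Matrix (Fin (dA k)) (Fin (dA k)) ℂ),
      F (Function.update E k B) = ∑ p : PiIx dA, ∑ q : PiIx dA,
        B (p k) (q k) * (((∏ i ∈ I.erase k, E i (p i) (q i)) *
          ∏ j ∈ Iᶜ, (if p j = q j then (1:ℂ) else 0)) * M q p) := by
    intro E k hk B
    rw [Ftrace]
    refine Finset.sum_congr rfl fun p _ => Finset.sum_congr rfl fun q _ => ?_
    rw [← Finset.mul_prod_erase I _ hk]
    have : ∀ i ∈ I.erase k, Function.update E k B i (p i) (q i) = E i (p i) (q i) := by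
      intro i hi
      rw [Function.update_of_ne (Finset.ne_of_mem_erase hi)]
    rw [Finset.prod_congr rfl this, Function.update_self]
    ring
  -- every tuple gives zero
  have claim : ∀ J : Finset (Fin N),
      ∀ E : (i : Fin N) → Matrix (Fin (dA i)) (Fin (dA i)) ℂ,
      (∀ i ∈ I \ J, IsEffect (E i)) → F E = 0 := by
    intro J
    induction J using Finset.induction_on with
    | empty =>
      intro E hE
      exact h E fun i hi => hE i (by simpa using hi)
    | @insert k J' hkJ IH =>
      intro E hE
      by_cases hkI : k ∈ I
      · have main : ∀ B ∈ Submodule.span ℂ {X : Matrix (Fin (dA k)) (Fin (dA k)) ℂ | IsEffect X},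
            F (Function.update E k B) = 0 := by
          intro B hB
          induction hB using Submodule.span_induction with
          | mem X hX =>
            refine IH (Function.update E k X) fun i hi => ?_
            rcases eq_or_ne i k with rfl | hik
            · rw [Function.update_self]; exact hX
            · rw [Function.update_of_ne hik]
              refine hE i ?_
              rcases Finset.mem_sdiff.mp hi with ⟨hiI, hiJ'⟩
              exact Finset.mem_sdiff.mpr ⟨hiI, fun hmem =>
                hiJ' ((Finset.mem_insert.mp hmem).resolve_left hik)⟩
          | zero =>
            rw [hupd E k hkI]
            simp
          | add x y hx hy hx' hy' =>
            rw [hupd E k hkI] at hx' hy' ⊢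
            have hsum : (∑ p : PiIx dA, ∑ q : PiIx dA, x (p k) (q k) * (((∏ i ∈ I.erase k, E i (p i) (q i)) * ∏ j ∈ Iᶜ, (if p j = q j then (1:ℂ) else 0)) * M q p))
                + (∑ p : PiIx dA, ∑ q : PiIx dA, y (p k) (q k) * (((∏ i ∈ I.erase k, E i (p i) (q i)) * ∏ j ∈ Iᶜ, (if p j = q j then (1:ℂ) else 0)) * M q p)) = 0 := by
              rw [hx', hy', add_zero]
            conv_rhs => rw [← hsum]
            rw [← Finset.sum_add_distrib]
            refine Finset.sum_congr rfl fun p _ => ?_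
            rw [← Finset.sum_add_distrib]
            refine Finset.sum_congr rfl fun q _ => ?_
            simp only [Matrix.add_apply]
            ring
          | smul r x hx hx' =>
            rw [hupd E k hkI] at hx' ⊢
            have hsum : r * (∑ p : PiIx dA, ∑ q : PiIx dA, x (p k) (q k) * (((∏ i ∈ I.erase k, E i (p i) (q i)) * ∏ j ∈ Iᶜ, (if p j = q j then (1:ℂ) else 0)) * M q p)) = 0 := by
              rw [hx', mul_zero]
            conv_rhs => rw [← hsum]
            rw [Finset.mul_sum]
            refine Finset.sum_congr rfl fun p _ => ?_
            rw [Finset.mul_sum]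
            refine Finset.sum_congr rfl fun q _ => ?_
            simp only [Matrix.smul_apply, smul_eq_mul]
            ring
        have := main (E k) (mem_span_effects (E k))
        rwa [Function.update_eq_self] at this
      · refine IH E fun i hi => ?_
        rcases Finset.mem_sdiff.mp hi with ⟨hiI, hiJ'⟩
        refine hE i (Finset.mem_sdiff.mpr ⟨hiI, fun hmem => ?_⟩)
        rcases Finset.mem_insert.mp hmem with h1 | h2
        · exact hkI (h1 ▸ hiI)
        · exact hiJ' h2
  have hall : ∀ E, F E = 0 := fun E => claim Finset.univ E (by simp)
  -- final computation
  ext a b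
  simp only [ptraceOut, Matrix.of_apply, Matrix.zero_apply]
  -- choose standard-basis effects
  set Estd : (i : Fin N) → Matrix (Fin (dA i)) (Fin (dA i)) ℂ :=
    fun i => Matrix.of fun x y =>
      if h' : i ∈ I then (if x = b ⟨i, h'⟩ ∧ y = a ⟨i, h'⟩ then 1 else 0) else 0 with hEstd
  have h0 := hall Estd
  rw [Ftrace] at h0
  -- rewrite the summand as a single indicator
  have hsummand : ∀ p q : PiIx dA,
      ((∏ i ∈ I, Estd i (p i) (q i)) * ∏ j ∈ Iᶜ, (if p j = q j then (1:ℂ) else 0)) * M q p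
      = if (∀ x : {m // m ∈ I}, p x.1 = b x ∧ q x.1 = a x) ∧ (∀ j, j ∉ I → p j = q j)
          then M q p else 0 := by
    intro p q
    have e1 : (∏ i ∈ I, Estd i (p i) (q i))
        = if (∀ x : {m // m ∈ I}, p x.1 = b x ∧ q x.1 = a x) then (1:ℂ) else 0 := by
      rw [← Finset.prod_attach I (fun i => Estd i (p i) (q i))]
      have : ∀ x : {m // m ∈ I},
          Estd x.1 (p x.1) (q x.1) = if p x.1 = b x ∧ q x.1 = a x then (1:ℂ) else 0 := by
        intro x
        simp only [hEstd, Matrix.of_apply, dif_pos x.2]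
      rw [Finset.prod_congr rfl (fun x _ => this x), Finset.prod_boole]
      by_cases hc : ∀ x : {m // m ∈ I}, p x.1 = b x ∧ q x.1 = a x
      · rw [if_pos (fun x _ => hc x), if_pos hc]
      · rw [if_neg (fun hA => hc fun x => hA x (Finset.mem_attach _ _)), if_neg hc]
    have e2 : (∏ j ∈ Iᶜ, (if p j = q j then (1:ℂ) else 0))
        = if (∀ j, j ∉ I → p j = q j) then (1:ℂ) else 0 := by
      rw [Finset.prod_boole]
      by_cases hc : ∀ j, j ∉ I → p j = q j
      · rw [if_pos (fun j hj => hc j (Finset.mem_compl.mp hj)), if_pos hc]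
      · rw [if_neg (fun hA => hc fun j hj => hA j (Finset.mem_compl.mpr hj)), if_neg hc]
    rw [e1, e2, ite_one_mul_ite_mul]
  simp only [hsummand] at h0
  -- collapse the q-sum
  set q0 : PiIx dA → PiIx dA :=
    fun p => fun i => if h : i ∈ I then a ⟨i, h⟩ else p i with hq0
  have hcond : ∀ p q : PiIx dA,
      ((∀ x : {m // m ∈ I}, p x.1 = b x ∧ q x.1 = a x) ∧ (∀ j, j ∉ I → p j = q j))
      ↔ ((∀ x : {m // m ∈ I}, p x.1 = b x) ∧ q = q0 p) := by
    intro p q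
    constructor
    · rintro ⟨h1, h2⟩
      refine ⟨fun x => (h1 x).1, funext fun i => ?_⟩
      by_cases hi : i ∈ I
      · rw [hq0]; simp only [dif_pos hi]
        exact (h1 ⟨i, hi⟩).2
      · rw [hq0]; simp only [dif_neg hi]
        exact (h2 i hi).symm
    · rintro ⟨h1, rfl⟩
      refine ⟨fun x => ⟨h1 x, ?_⟩, fun j hj => ?_⟩
      · rw [hq0]; simp only [dif_pos x.2]
      · rw [hq0]; simp only [dif_neg hj]
  have hstep : ∀ p : PiIx dA, (∑ q : PiIx dA,
      if (∀ x : {m // m ∈ I}, p x.1 = b x ∧ q x.1 = a x) ∧ (∀ j, j ∉ I → p j = q j)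
        then M q p else 0)
      = if (∀ x : {m // m ∈ I}, p x.1 = b x) then M (q0 p) p else 0 := by
    intro p
    have : ∀ q : PiIx dA,
        (if (∀ x : {m // m ∈ I}, p x.1 = b x ∧ q x.1 = a x) ∧ (∀ j, j ∉ I → p j = q j)
          then M q p else 0)
        = if q = q0 p then (if (∀ x : {m // m ∈ I}, p x.1 = b x) then M q p else 0) else 0 := by
      intro q
      rw [if_congr (hcond p q) rfl rfl]
      split_ifs <;> tauto
    rw [Finset.sum_congr rfl (fun q _ => this q), Finset.sum_ite_eq' Finset.univ (q0 p)
      (fun q => if (∀ x : {m // m ∈ I}, p x.1 = b x) then M q p else 0)]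
    simp
  rw [Finset.sum_congr rfl (fun p _ => hstep p)] at h0
  -- change variables in the p-sum
  have hEquiv := Fintype.sum_equiv
    (Equiv.piEquivPiSubtypeProd (fun i => i ∈ I) (fun i => Fin (dA i)))
    (fun p : PiIx dA => if (∀ x : {m // m ∈ I}, p x.1 = b x) then M (q0 p) p else 0)
    (fun z => (fun p : PiIx dA => if (∀ x : {m // m ∈ I}, p x.1 = b x) then M (q0 p) p else 0)
      ((Equiv.piEquivPiSubtypeProd (fun i => i ∈ I) (fun i => Fin (dA i))).symm z))
    (fun p => by simp only [Equiv.symm_apply_apply])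
  rw [hEquiv, Fintype.sum_prod_type] at h0
  -- collapse the u-sum
  have gval : ∀ (u : (x : {m // m ∈ I}) → Fin (dA x.1))
      (c : (j : {m // m ∉ I}) → Fin (dA j.1)),
      (fun p : PiIx dA => if (∀ x : {m // m ∈ I}, p x.1 = b x) then M (q0 p) p else 0)
        ((Equiv.piEquivPiSubtypeProd (fun i => i ∈ I) (fun i => Fin (dA i))).symm (u, c))
      = if u = b then
          M (fun i => if h : i ∈ I then a ⟨i, h⟩ else c ⟨i, h⟩)
            (fun i => if h : i ∈ I then b ⟨i, h⟩ else c ⟨i, h⟩) else 0 := by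
    intro u c
    beta_reduce
    by_cases hu : u = b
    · rw [hu]
      have h1 : ((Equiv.piEquivPiSubtypeProd (fun i => i ∈ I) (fun i => Fin (dA i))).symm (b, c))
          = fun i => if h : i ∈ I then b ⟨i, h⟩ else c ⟨i, h⟩ := by
        funext i
        by_cases hi : i ∈ I <;> simp [Equiv.piEquivPiSubtypeProd_symm_apply, hi]
      have h2 : q0 ((Equiv.piEquivPiSubtypeProd (fun i => i ∈ I) (fun i => Fin (dA i))).symm (b, c))
          = fun i => if h : i ∈ I then a ⟨i, h⟩ else c ⟨i, h⟩ := by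
        funext i
        by_cases hi : i ∈ I <;> simp [hq0, h1, hi]
      rw [h2, h1]
      split_ifs <;>
        first
          | rfl
          | (exact absurd rfl (by assumption))
          | (exact absurd (fun x => by simp [x.2]) (by assumption))
    · rw [if_neg, if_neg hu]
      intro hcond
      apply hu
      funext x
      have := hcond x
      simpa [Equiv.piEquivPiSubtypeProd_symm_apply, x.2] using this
  simp only [gval] at h0
  have hpull : ∀ u : (x : {m // m ∈ I}) → Fin (dA x.1),
      (∑ c : (j : {m // m ∉ I}) → Fin (dA j.1),
        if u = b then
          M (fun i => if h : i ∈ I then a ⟨i, h⟩ else c ⟨i, h⟩)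
            (fun i => if h : i ∈ I then b ⟨i, h⟩ else c ⟨i, h⟩) else 0)
      = if u = b then (∑ c : (j : {m // m ∉ I}) → Fin (dA j.1),
          M (fun i => if h : i ∈ I then a ⟨i, h⟩ else c ⟨i, h⟩)
            (fun i => if h : i ∈ I then b ⟨i, h⟩ else c ⟨i, h⟩)) else 0 := by
    intro u
    split_ifs <;> simp
  rw [Finset.sum_congr rfl (fun u _ => hpull u), Finset.sum_ite_eq' Finset.univ b] at h0
  simpa using h0


end Effects

/-- let `T` be a Hermitian-preserving linear map, `I` nonempty,
`Δ := ⊗_{i∈I}(ρ_{i,0} − ρ_{i,1}) ⊗ ⊗_{j∉I} σ_j` with all `ρ`, `σ` density matrices.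
If `Tr[(⊗_{i∈I} E_i ⊗ ⊗_{j∉I} I_{A_j}) · T(Δ)] = 0` for all effects `0 ≤ E_i ≤ I`
(`i ∈ I`), then the partial trace of `T(Δ)` over `(A_j)_{j∉I}` vanishes. -/
theorem statement_13 {N : ℕ} (dX dA : Fin N → ℕ)
    (T : Matrix (PiIx dX) (PiIx dX) ℂ →ₗ[ℂ] Matrix (PiIx dA) (PiIx dA) ℂ)
    (hHerm : ∀ ρ : Matrix (PiIx dX) (PiIx dX) ℂ, ρ.IsHermitian → (T ρ).IsHermitian)
    (I : Finset (Fin N)) (hI : I.Nonempty)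
    (ρ : (i : Fin N) → Fin 2 → Matrix (Fin (dX i)) (Fin (dX i)) ℂ)
    (σ : (i : Fin N) → Matrix (Fin (dX i)) (Fin (dX i)) ℂ)
    (hρ : ∀ i b, IsDensity (ρ i b)) (hσ : ∀ j, IsDensity (σ j))
    (h : ∀ E : (i : Fin N) → Matrix (Fin (dA i)) (Fin (dA i)) ℂ,
      (∀ i ∈ I, (E i).PosSemidef ∧
        ((1 : Matrix (Fin (dA i)) (Fin (dA i)) ℂ) - E i).PosSemidef) →
      Matrix.trace
        ((Matrix.of fun a b : PiIx dA =>
            (∏ i ∈ I, E i (a i) (b i)) * ∏ j ∈ Iᶜ, (if a j = b j then (1 : ℂ) else 0)) *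
          T (Matrix.of fun x y =>
            (∏ i ∈ I, (ρ i 0 - ρ i 1) (x i) (y i)) * ∏ j ∈ Iᶜ, σ j (x j) (y j))) = 0) :
    ptraceOut I (T (Matrix.of fun x y =>
        (∏ i ∈ I, (ρ i 0 - ρ i 1) (x i) (y i)) * ∏ j ∈ Iᶜ, σ j (x j) (y j))) = 0 :=
  aux_main dA (T (Matrix.of fun x y =>
    (∏ i ∈ I, (ρ i 0 - ρ i 1) (x i) (y i)) * ∏ j ∈ Iᶜ, σ j (x j) (y j))) I hI h

end ParityErasurePaper
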